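/- Let R be a von Neumann regular ring with identity, let a, b, c ∈ R be fixed, and let e, f ∈ R be idempotents with eR = aR ∩ cR and Rf = Ra ∩ Rb. Let C = {s ∈ eRf : s ≤⊕ a}, and let g be any von Neumann inverse of a (a*g*a = a). Then C = {e*u*f : u ∈ R and u*(f*g*e)*u = u}, i.e. C is exactly the set of elements e*u*f where u is a weak von Neumann inverse of f*g*e. -/
import Mathlib


open Pointwise

/-- The right ideal `aR = {a*r : r ∈ R}`. -/
def rId {R : Type*} [Ring R] (a : R) : Set R := Set.range (fun r => a * r)

/-- The left ideal `Ra = {r*a : r ∈ R}`. -/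
def lId {R : Type*} [Ring R] (a : R) : Set R := Set.range (fun r => r * a)

/-- The direct sum partial order: `a ≤⊕ b` iff `bR = aR ⊕ (b-a)R`. -/
def dsLE {R : Type*} [Ring R] (a b : R) : Prop :=
  rId a + rId (b - a) = rId b ∧ rId a ∩ rId (b - a) = {0}

/-- The set `eRf = {e*r*f : r ∈ R}`. -/
def midSet {R : Type*} [Ring R] (e f : R) : Set R := {x : R | ∃ r : R, x = e * r * f}

private lemma mem_rId' {R : Type*} [Ring R] {a x : R} : x ∈ rId a ↔ ∃ r, a * r = x :=
  Iff.rfl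

private lemma dsLE_of {R : Type*} [Ring R] {a s g : R}
    (h1 : a * g * s = s) (h2 : s * g * a = s) (h3 : s * g * s = s) : dsLE s a := by
  have h1' : ∀ x, a * (g * (s * x)) = s * x := fun x => by
    rw [← mul_assoc, ← mul_assoc, h1]
  have h2' : ∀ x, s * (g * (a * x)) = s * x := fun x => by
    rw [← mul_assoc, ← mul_assoc, h2]
  have h3' : ∀ x, s * (g * (s * x)) = s * x := fun x => by
    rw [← mul_assoc, ← mul_assoc, h3]
  constructor
  · apply Set.Subset.antisymm
    · rintro x hx
      rw [Set.mem_add] at hx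
      obtain ⟨y, ⟨r1, rfl⟩, z, ⟨r2, rfl⟩, rfl⟩ := hx
      refine ⟨g * (s * r1) + (r2 - g * (s * r2)), ?_⟩
      simp only [mul_add, mul_sub, h1', sub_mul]
    · rintro x ⟨r, rfl⟩
      rw [Set.mem_add]
      refine ⟨s * r, ⟨r, rfl⟩, (a - s) * r, ⟨r, rfl⟩, ?_⟩
      rw [sub_mul]
      abel
  · apply Set.Subset.antisymm
    · rintro x ⟨⟨r1, hr1⟩, ⟨r2, hr2⟩⟩
      have hr1' : s * r1 = x := hr1
      have hr2' : (a - s) * r2 = x := hr2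
      have e1 : s * (g * x) = x := by rw [← hr1', h3']
      have e2 : s * (g * x) = 0 := by
        rw [← hr2', sub_mul, mul_sub, mul_sub, h2', h3', sub_self]
      rw [Set.mem_singleton_iff, ← e1, e2]
    · rintro x hx
      rw [Set.mem_singleton_iff] at hx
      subst hx
      exact ⟨⟨0, mul_zero _⟩, ⟨0, mul_zero _⟩⟩

theorem stmt11 {R : Type*} [Ring R]
    (hreg : ∀ r : R, ∃ x : R, r * x * r = r)
    (a b c e f : R) (he : e * e = e) (hf : f * f = f)
    (heR : rId e = rId a ∩ rId c) (hRf : lId f = lId a ∩ lId b)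
    (C : Set R) (hC : C = {s ∈ midSet e f | dsLE s a})
    (g : R) (hg : a * g * a = a) :
    C = {w : R | ∃ u : R, u * (f * g * e) * u = u ∧ w = e * u * f} := by
  -- e ∈ aR and f ∈ Ra
  obtain ⟨p, hp⟩ : e ∈ rId a := by
    have h : e ∈ rId e := ⟨e, he⟩
    rw [heR] at h; exact h.1
  obtain ⟨q, hq⟩ : f ∈ lId a := by
    have h : f ∈ lId f := ⟨f, hf⟩
    rw [hRf] at h; exact h.1
  have hp' : a * p = e := hp
  have hq' : q * a = f := hq
  have hage : a * g * e = e := by rw [← hp', ← mul_assoc, hg]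
  have hfga : f * g * a = f := by
    rw [← hq', mul_assoc, mul_assoc, ← mul_assoc a g a, hg]
  have hage' : ∀ x, a * (g * (e * x)) = e * x := fun x => by
    rw [← mul_assoc, ← mul_assoc, hage]
  have hfga' : f * (g * a) = f := by rw [← mul_assoc, hfga]
  subst hC
  ext w
  simp only [Set.mem_setOf_eq, Set.mem_sep_iff]
  constructor
  · rintro ⟨⟨r, rfl⟩, hds⟩
    set s := e * r * f with hs
    have hes : e * s = s := by
      rw [hs, ← mul_assoc, ← mul_assoc, he]
    have hsf : s * f = s := by rw [hs, mul_assoc, hf]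
    -- a g s = s
    have h1 : a * g * s = s := by rw [mul_assoc, ← hes, hage', hes]
    -- s g a = s
    have h2 : s * g * a = s := by
      conv_lhs => rw [← hsf, mul_assoc s f g, mul_assoc s (f * g) a, hfga]
      exact hsf
    -- s g s = s  (from the direct sum)
    have h3 : s * g * s = s := by
      have m1 : s - s * g * s ∈ rId s := by
        refine ⟨1 - g * s, ?_⟩
        show s * (1 - g * s) = s - s * g * s
        rw [mul_sub, mul_one, ← mul_assoc]
      have m2 : s - s * g * s ∈ rId (a - s) := by
        refine ⟨g * s, ?_⟩
        show (a - s) * (g * s) = s - s * g * s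
        rw [sub_mul, ← mul_assoc a g s, ← mul_assoc s g s, h1]
      have : s - s * g * s ∈ rId s ∩ rId (a - s) := ⟨m1, m2⟩
      rw [hds.2, Set.mem_singleton_iff, sub_eq_zero] at this
      exact this.symm
    refine ⟨s, ?_, ?_⟩
    · -- s * (f*g*e) * s = s
      calc s * (f * g * e) * s = s * f * g * (e * s) := by
            simp only [mul_assoc]
        _ = s := by rw [hsf, hes, h3]
    · show e * r * f = e * s * f
      have hesf : e * s * f = s := by rw [hes, hsf]
      rw [hesf]
  · rintro ⟨u, hu, rfl⟩
    set s := e * u * f with hs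
    constructor
    · exact ⟨u, rfl⟩
    · have hes : e * s = s := by rw [hs, ← mul_assoc, ← mul_assoc, he]
      have hsf : s * f = s := by rw [hs, mul_assoc, hf]
      have h1 : a * g * s = s := by rw [mul_assoc, ← hes, hage', hes]
      have h2 : s * g * a = s := by
        conv_lhs => rw [← hsf, mul_assoc s f g, mul_assoc s (f * g) a, hfga]
        exact hsf
      have h3 : s * g * s = s := by
        calc s * g * s = e * (u * (f * g * e) * u) * f := by
              rw [hs]; simp only [mul_assoc]
          _ = s := by rw [hu]
      exact dsLE_of h1 h2 h3
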